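/- arXiv:2106.06542 — 2 statements merged into one kernel-verified Lean document; each statement's English description precedes it below -/
import Mathlib

section
/- Let ρ be a formal power series over ℂ with constant coefficient 0 and nonzero linear coefficient, regarded as an element of the field of formal Laurent series ℂ((t)), where it is invertible (it has t-adic order 1). Then for every Laurent polynomial f ∈ ℂ[t, t^{-1}], the residue (the coefficient of t^{-1}) of the Laurent series f(ρ(t)) · ρ'(t) equals the residue of f, where f(ρ(t)) denotes the finite sum Σ_n a_n ρ(t)^n ∈ ℂ((t)) obtained by substituting ρ for t in f (negative powers computed in the field ℂ((t))). In particular, the residue map {\rm Res}_t : ℂ((t)) → ℂ is independent of the choice of formal coordinate. -/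
/-!
Write `ρ = X * u` with `u` a unit and `w = u⁻¹`. For `n ≥ 0`, `ρ ^ n * ρ'` is a power series
and has no residue. For `n = -(k + 1)`, `ρ ^ n * ρ' = X ^ (-(k + 1)) * w ^ (k + 1) * ρ'`, whose
residue is the `k`-th coefficient of `w ^ (k + 1) * ρ' = w ^ k + X * w ^ (k + 1) * u'`. This is `1`
for `k = 0`; for `k ≥ 1` we have `w ^ (k + 1) * u' = -(w ^ k)' / k`, and the `k`-th coefficient
of `X * g'` is `k` times that of `g`, so the two terms cancel. This is the power-series shadow of
`ρ ^ n * ρ' = (ρ ^ (n + 1))' / (n + 1)` having no residue. The theorem follows by linearity in `f`.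
-/

open PowerSeries
open scoped LaurentSeries

def laurentRes (g : LaurentSeries ℂ) : ℂ := g.coeff (-1)

namespace PowerSeries

section CommSemiring

variable {R : Type*} [CommSemiring R]

theorem coeff_X_mul_derivative (f : R⟦X⟧) (n : ℕ) :
    coeff n (X * d⁄dX R f) = n * coeff n f := by
  cases n with
  | zero => simp
  | succ n => rw [coeff_succ_X_mul, coeff_derivative]; push_cast; ring

theorem derivative_X_mul (u : R⟦X⟧) : d⁄dX R (X * u) = u + X * d⁄dX R u := by
  simp [mul_comm]

end CommSemiring

variable {K : Type*} [Field K]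

theorem derivative_inv_pow (u : K⟦X⟧) (k : ℕ) :
    d⁄dX K (u⁻¹ ^ k) = -(k * u⁻¹ ^ (k + 1) * d⁄dX K u) := by
  cases k with
  | zero => simp
  | succ k => rw [derivative_pow, derivative_inv']; push_cast; ring

theorem coeff_inv_pow_succ_mul_derivative_X_mul [CharZero K] {u : K⟦X⟧}
    (hu : constantCoeff u ≠ 0) (k : ℕ) :
    coeff k (u⁻¹ ^ (k + 1) * d⁄dX K (X * u)) = if k = 0 then 1 else 0 := by
  have hsplit : u⁻¹ ^ (k + 1) * d⁄dX K (X * u) = u⁻¹ ^ k + X * (u⁻¹ ^ (k + 1) * d⁄dX K u) := by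
    rw [derivative_X_mul, mul_add, pow_succ, mul_assoc _ u⁻¹ u, PowerSeries.inv_mul_cancel u hu]
    ring
  rw [hsplit, map_add]
  split_ifs with hk
  · subst hk
    simp
  · have hX : X * (u⁻¹ ^ (k + 1) * d⁄dX K u) * C (k : K) = -(X * d⁄dX K (u⁻¹ ^ k)) := by
      rw [derivative_inv_pow, map_natCast]
      ring
    replace hX := congrArg (coeff k) hX
    rw [coeff_mul_C, map_neg, coeff_X_mul_derivative, mul_comm, ← mul_neg] at hX
    rw [mul_left_cancel₀ (Nat.cast_ne_zero.mpr hk) hX, add_neg_cancel]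

theorem coe_inv {u : K⟦X⟧} (hu : constantCoeff u ≠ 0) :
    ((u⁻¹ : K⟦X⟧) : K⸨X⸩) = (u : K⸨X⸩)⁻¹ :=
  eq_inv_of_mul_eq_one_left <| by rw [← coe_mul, PowerSeries.inv_mul_cancel u hu, coe_one]

end PowerSeries

namespace LaurentSeries

open HahnSeries

variable {K : Type*} [Field K]

theorem coe_X_mul_zpow_negSucc {u : K⟦X⟧} (hu : constantCoeff u ≠ 0) (k : ℕ) :
    ((X * u : K⟦X⟧) : K⸨X⸩) ^ Int.negSucc k =
      single (Int.negSucc k) 1 * ((u⁻¹ ^ (k + 1) : K⟦X⟧) : K⸨X⸩) := by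
  rw [coe_mul, coe_X, mul_zpow, ← RatFunc.single_zpow, coe_pow, coe_inv hu, zpow_negSucc, inv_pow]

theorem coeff_neg_one_coe_zpow_mul_derivative [CharZero K] {ρ : K⟦X⟧}
    (h0 : constantCoeff ρ = 0) (h1 : coeff 1 ρ ≠ 0) (n : ℤ) :
    ((ρ : K⸨X⸩) ^ n * (d⁄dX K ρ : K⸨X⸩)).coeff (-1) = if n = -1 then 1 else 0 := by
  obtain ⟨u, rfl⟩ := X_dvd_iff.mpr h0
  have hu : constantCoeff u ≠ 0 := by
    rwa [← coeff_zero_eq_constantCoeff_apply, ← coeff_succ_X_mul]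
  cases n with
  | ofNat k =>
    rw [Int.ofNat_eq_natCast, zpow_natCast, ← coe_pow, ← coe_mul, coeff_coe]
    simp
  | negSucc k =>
    rw [coe_X_mul_zpow_negSucc hu, mul_assoc, ← coe_mul,
      show (-1 : ℤ) = k + Int.negSucc k by omega, coeff_single_mul_add, one_mul, coeff_coe,
      if_neg (by omega), Int.natAbs_natCast, coeff_inv_pow_succ_mul_derivative_X_mul hu]
    simp [Int.negSucc_eq]

end LaurentSeries

/-- Coordinate independence of the residue: for a formal change of coordinate
`ρ` (constant term `0`, nonzero linear term) and any Laurent polynomial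
`f = ∑ₙ aₙ tⁿ` (encoded by its finitely supported coefficient function
`f : ℤ →₀ ℂ`), the residue of `f(ρ(t)) · ρ'(t)` equals the residue `a₋₁` of
`f`; here `f(ρ(t)) = ∑ₙ aₙ ρ(t)ⁿ` is computed in the field `ℂ((t))`, where
`ρ` is invertible since it has `t`-adic order `1`. -/
theorem residue_coordinate_independent (ρ : PowerSeries ℂ)
    (h0 : constantCoeff ρ = 0) (h1 : coeff 1 ρ ≠ 0) (f : ℤ →₀ ℂ) :
    laurentRes
      ((f.sum fun n a => a • ((ρ : LaurentSeries ℂ) ^ n)) *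
        ((derivativeFun ρ : PowerSeries ℂ) : LaurentSeries ℂ)) = f (-1) := by
  change (_ * ((d⁄dX ℂ ρ : PowerSeries ℂ) : LaurentSeries ℂ)).coeff (-1) = _
  rw [Finsupp.sum_mul, Finsupp.sum, HahnSeries.coeff_sum]
  simp_rw [← HahnSeries.single_zero_mul_eq_smul, mul_assoc, HahnSeries.coeff_single_zero_mul,
    LaurentSeries.coeff_neg_one_coe_zpow_mul_derivative h0 h1, mul_ite, mul_one, mul_zero]
  exact Finsupp.sum_ite_self_eq' f (-1)
end

section
/- Let V be a ℂ-vector space and φ : ℂ[t, t^{-1}] → End(V) a ℂ-linear map such that for every v ∈ V there exists L with φ(t^l) v = 0 for all l ≥ L. Let μ be a formal power series over ℂ with constant coefficient 0 and nonzero linear coefficient. Then for every Laurent polynomial f ∈ ℂ[t, t^{-1}] and every v ∈ V, the family of vectors c_n(μ, f) · φ(t^n) v indexed by n ∈ ℤ, where c_n(μ, f) := Res_t( μ(t)^{-n-1} · μ'(t) · f(μ(t)) ) (computed in the Laurent series field ℂ((t)), with μ(t)^{-n-1} the corresponding power of the unit μ(t)), has all but finitely many members equal to 0, and Σ_{n∈ℤ}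 c_n(μ, f) · φ(t^n) v = φ(f) v. In other words, the End(V)-valued differential ω = Σ_{n∈ℤ} φ(t^n) t^{-n-1} dt on the punctured disc is canonical: its pairing with any test function f is independent of the choice of formal coordinate μ. -/
open PowerSeries

/-- The coefficient `cₙ(μ, f) = Res_t(μ(t)^{-n-1} μ'(t) f(μ(t)))` expressing
the pairing of the canonical `End(V)`-valued differential with a test Laurent
polynomial `f = ∑ₘ aₘ tᵐ` in the coordinate `μ`; powers of the unit `μ(t)` are
computed in the field `ℂ((t))`. -/
noncomputable def omegaCoeff (μ : PowerSeries ℂ) (f : ℤ →₀ ℂ) (n : ℤ) : ℂ :=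
  laurentRes (((μ : LaurentSeries ℂ) ^ (-n - 1)) *
      ((derivativeFun μ : PowerSeries ℂ) : LaurentSeries ℂ) *
      (f.sum fun m a => a • ((μ : LaurentSeries ℂ) ^ m)))

/-!
Write `μ = t · u` with `u` a unit power series. For `k ≠ -1` one has
`μ^k μ' = (μ^(k+1))' / (k+1)`, and a derivative has no residue; for `k = -1` the
logarithmic derivative is `μ'/μ = t⁻¹ + u'/u` with `u'/u` a power series, so its
residue is `1`. Hence `Res(μ^(-n-1) μ' f(μ)) = ∑ₘ aₘ Res(μ^(m-n-1) μ') = aₙ`, and the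
sum is `φ(f) v` by linearity.
-/

open HahnSeries
open scoped LaurentSeries

namespace LaurentSeries

variable {R : Type*} [CommRing R]

theorem derivative_single_one_mul (m : ℤ) (F : R⸨X⸩) :
    derivative R (single m 1 * F) = single (m - 1) (m : R) * F + single m 1 * derivative R F := by
  ext n
  obtain ⟨a, rfl⟩ : ∃ a, n = a + m := ⟨n - m, by ring⟩
  have h1 : a + m + (1 : ℕ) = a + 1 + m := by push_cast; ring
  have h2 : a + m = a + 1 + (m - 1) := by ring
  rw [derivative_apply, hasseDeriv_coeff, h1, coeff_single_mul_add, coeff_add, h2,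
    coeff_single_mul_add, ← h2, coeff_single_mul_add, derivative_apply, hasseDeriv_coeff]
  simp only [Ring.choose_one_right, one_mul, zsmul_eq_mul, Nat.cast_one]
  push_cast
  ring

theorem derivative_coe (g : R⟦X⟧) : derivative R (g : R⸨X⸩) = (d⁄dX R g : R⸨X⸩) := by
  ext n
  rw [derivative_apply, hasseDeriv_coeff, coeff_coe, coeff_coe]
  simp only [Ring.choose_one_right, zsmul_eq_mul, Nat.cast_one]
  rcases lt_trichotomy n (-1) with hn | rfl | hn
  · rw [if_pos (by omega), if_pos (by omega), mul_zero]
  · simp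
  · obtain ⟨k, rfl⟩ : ∃ k : ℕ, n = k := ⟨n.toNat, by omega⟩
    rw [if_neg (by omega), if_neg (by omega), coeff_derivative]
    simp only [Int.natAbs_natCast]
    push_cast
    rw [show ((k : ℤ) + 1).natAbs = k + 1 by omega, mul_comm]

/-- Writing `x = t^a g` and `y = t^b h` with power series `g, h` reduces the Leibniz rule to the
one for power series. -/
theorem derivative_mul (x y : R⸨X⸩) :
    derivative R (x * y) = x * derivative R y + y * derivative R x := by
  rw [← single_order_mul_powerSeriesPart x, ← single_order_mul_powerSeriesPart y]
  set a := x.order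
  set b := y.order
  set g := x.powerSeriesPart
  set h := y.powerSeriesPart
  have hab : single a (1 : R) * single b 1 = single (a + b) 1 := by rw [single_mul_single, one_mul]
  have ha : single b (1 : R) * single (a - 1) (a : R) = single (a + b - 1) (a : R) := by
    rw [single_mul_single, one_mul]; ring_nf
  have hb : single a (1 : R) * single (b - 1) (b : R) = single (a + b - 1) (b : R) := by
    rw [single_mul_single, one_mul]; ring_nf
  have hsum : single (a + b - 1) ((a + b : ℤ) : R) =
      single (a + b - 1) (a : R) + single (a + b - 1) (b : R) := by
    rw [Int.cast_add, single_add]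
  have hxy : single a (1 : R) * (g : R⸨X⸩) * (single b 1 * (h : R⸨X⸩)) =
      single (a + b) 1 * ((g * h : R⟦X⟧) : R⸨X⸩) := by
    rw [coe_mul, ← hab]; ring
  rw [hxy]
  simp only [derivative_single_one_mul, derivative_coe]
  simp only [Derivation.leibniz, smul_eq_mul, coe_add, coe_mul]
  linear_combination (↑g * ↑h : R⸨X⸩) * (hsum - ha - hb)
    - (↑g * ↑(d⁄dX R h) + ↑h * ↑(d⁄dX R g) : R⸨X⸩) * hab

noncomputable def derivation : Derivation R R⸨X⸩ R⸨X⸩ where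
  toFun := derivative R
  map_add' := map_add _
  -- the `R`-algebra structure of `R⸨X⸩` is inherited from `R⟦X⟧`, so this scalar action is
  -- not definitionally the one `derivative R` is linear for
  map_smul' r F := by
    have hr : algebraMap R R⸨X⸩ r = ((C r : R⟦X⟧) : R⸨X⸩) := rfl
    rw [RingHom.id_apply, Algebra.smul_def, derivative_mul, hr, derivative_coe, derivative_C,
      coe_zero, mul_zero, add_zero, coe_C, C_mul_eq_smul]
  map_one_eq_zero' := by
    ext n
    by_cases h : n + 1 = 0 <;> simp [HahnSeries.coeff_one, h]
  leibniz' := derivative_mul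

theorem derivation_apply (F : R⸨X⸩) : derivation F = derivative R F := rfl

theorem coeff_derivative_neg_one (F : R⸨X⸩) : (derivative R F).coeff (-1) = 0 := by
  simp

section Field

variable {K : Type*} [Field K]

theorem coeff_zpow_mul_derivative_of_ne [CharZero K] (μ : K⟦X⟧) {k : ℤ} (hk : k ≠ -1) :
    ((μ : K⸨X⸩) ^ k * (d⁄dX K μ : K⸨X⸩)).coeff (-1) = 0 := by
  have h := congrArg (HahnSeries.coeff · (-1)) (derivation.leibniz_zpow (μ : K⸨X⸩) (k + 1))
  simp only [derivation_apply, coeff_derivative_neg_one, derivative_coe, add_sub_cancel_right,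
    smul_eq_mul, HahnSeries.coeff_smul] at h
  exact (smul_eq_zero.mp h.symm).resolve_left (by omega)

theorem coeff_inv_mul_derivative (μ : K⟦X⟧) (h0 : constantCoeff μ = 0)
    (h1 : coeff 1 μ ≠ 0) :
    ((μ : K⸨X⸩)⁻¹ * (d⁄dX K μ : K⸨X⸩)).coeff (-1) = 1 := by
  obtain ⟨u, rfl⟩ := X_dvd_iff.mpr h0
  have hu : constantCoeff u ≠ 0 := by rwa [coeff_succ_X_mul 0, coeff_zero_eq_constantCoeff] at h1
  have hu' : (u : K⸨X⸩) ≠ 0 := by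
    rw [ne_eq, ← coe_zero, ofPowerSeries_injective.eq_iff]; rintro rfl; simp at hu
  have hinv : ((u⁻¹ : K⟦X⟧) : K⸨X⸩) = (u : K⸨X⸩)⁻¹ :=
    eq_inv_of_mul_eq_one_right (by rw [← coe_mul, PowerSeries.mul_inv_cancel u hu, coe_one])
  have hlog : ((X * u : K⟦X⟧) : K⸨X⸩)⁻¹ * (d⁄dX K (X * u) : K⸨X⸩)
      = single (-1) 1 + ((u⁻¹ * d⁄dX K u : K⟦X⟧) : K⸨X⸩) := by
    have hX : (single 1 1 : K⸨X⸩) ≠ 0 := single_ne_zero one_ne_zero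
    rw [Derivation.leibniz, derivative_X, smul_eq_mul, smul_eq_mul, mul_one, coe_add, coe_mul,
      coe_mul, coe_mul, hinv, coe_X, ← inv_one, ← inv_single, inv_one]
    field_simp
    ring
  rw [hlog, coeff_add, coeff_single_same, coeff_coe, if_pos (by omega), add_zero]

theorem coeff_zpow_mul_derivative [CharZero K] (μ : K⟦X⟧) (h0 : constantCoeff μ = 0)
    (h1 : coeff 1 μ ≠ 0) (k : ℤ) :
    ((μ : K⸨X⸩) ^ k * (d⁄dX K μ : K⸨X⸩)).coeff (-1) = if k = -1 then 1 else 0 := by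
  split_ifs with hk
  · rw [hk, zpow_neg_one, coeff_inv_mul_derivative μ h0 h1]
  · exact coeff_zpow_mul_derivative_of_ne μ hk

end Field

end LaurentSeries

theorem omegaCoeff_eq (μ : ℂ⟦X⟧) (h0 : constantCoeff μ = 0) (h1 : coeff 1 μ ≠ 0)
    (f : ℤ →₀ ℂ) (n : ℤ) : omegaCoeff μ f n = f n := by
  have hμ : (μ : ℂ⸨X⸩) ≠ 0 := by
    intro h
    simp [ofPowerSeries_injective (h.trans (map_zero _).symm)] at h1
  have hterm (m : ℤ) (a : ℂ) :
      (μ : ℂ⸨X⸩) ^ (-n - 1) * (d⁄dX ℂ μ : ℂ⸨X⸩) * (a • (μ : ℂ⸨X⸩) ^ m)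
        = a • ((μ : ℂ⸨X⸩) ^ (m - n - 1) * (d⁄dX ℂ μ : ℂ⸨X⸩)) := by
    rw [← C_mul_eq_smul, ← C_mul_eq_smul, show m - n - 1 = -n - 1 + m by ring, zpow_add₀ hμ]
    ring
  have hidx (m : ℤ) : m - n - 1 = -1 ↔ m = n := by omega
  -- `omegaCoeff` is stated with the deprecated `derivativeFun`, definitionally `d⁄dX ℂ`
  change laurentRes (_ * (d⁄dX ℂ μ : ℂ⸨X⸩) * _) = _
  simp only [laurentRes, Finsupp.sum, Finset.mul_sum, hterm, HahnSeries.coeff_sum,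
    HahnSeries.coeff_smul, LaurentSeries.coeff_zpow_mul_derivative μ h0 h1, smul_eq_mul, hidx,
    mul_ite, mul_one, mul_zero, Finset.sum_ite_eq', Finsupp.mem_support_iff, ite_not,
    ite_eq_right_iff]
  exact Eq.symm

theorem Finsupp.finsum_smul_map_single {ι R M : Type*} [Semiring R] [AddCommMonoid M]
    [Module R M] (ψ : (ι →₀ R) →ₗ[R] M) (f : ι →₀ R) :
    ∑ᶠ i, f i • ψ (single i 1) = ψ f := by
  rw [finsum_eq_sum_of_support_subset (s := f.support) _
    fun i hi => Finsupp.mem_support_iff.mpr (left_ne_zero_of_smul hi)]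
  conv_rhs => rw [← f.sum_single]
  simp only [Finsupp.sum, map_sum, ← map_smul, Finsupp.smul_single_one]

theorem canonical_differential_general (V : Type*) [AddCommGroup V] [Module ℂ V]
    (φ : (ℤ →₀ ℂ) →ₗ[ℂ] Module.End ℂ V)
    (μ : PowerSeries ℂ) (h0 : constantCoeff μ = 0) (h1 : coeff 1 μ ≠ 0)
    (f : ℤ →₀ ℂ) (v : V) :
    {n : ℤ | omegaCoeff μ f n • φ (Finsupp.single n 1) v ≠ 0}.Finite ∧
    ∑ᶠ n : ℤ, omegaCoeff μ f n • φ (Finsupp.single n 1) v = φ f v := by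
  simp only [omegaCoeff_eq μ h0 h1]
  exact ⟨f.support.finite_toSet.subset fun n hn =>
      Finsupp.mem_support_iff.mpr (left_ne_zero_of_smul hn),
    Finsupp.finsum_smul_map_single (LinearMap.applyₗ v ∘ₗ φ) f⟩

/-- The `End(V)`-valued differential `ω = ∑ₙ φ(tⁿ) t^{-n-1} dt` on the
punctured disc is canonical: for any formal coordinate `μ`, its pairing with a
Laurent polynomial `f` (encoded by `f : ℤ →₀ ℂ`, with `tⁿ = single n 1`) is a
finite sum and recovers `φ(f) v`, independently of the coordinate `μ`. -/
theorem canonical_differential (V : Type*) [AddCommGroup V] [Module ℂ V]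
    (φ : (ℤ →₀ ℂ) →ₗ[ℂ] Module.End ℂ V)
    (hφ : ∀ v : V, ∃ L : ℤ, ∀ l : ℤ, L ≤ l → φ (Finsupp.single l 1) v = 0)
    (μ : PowerSeries ℂ) (h0 : constantCoeff μ = 0) (h1 : coeff 1 μ ≠ 0)
    (f : ℤ →₀ ℂ) (v : V) :
    {n : ℤ | omegaCoeff μ f n • φ (Finsupp.single n 1) v ≠ 0}.Finite ∧
    ∑ᶠ n : ℤ, omegaCoeff μ f n • φ (Finsupp.single n 1) v = φ f v :=
  canonical_differential_general V φ μ h0 h1 f v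
end
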